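/- arXiv:2111.01745 — 2 statements merged into one kernel-verified Lean document; each statement's English description precedes it below -/
import Mathlib

section
/- Let Q₀ be a nonnegative radial function supported in ℤ_p with Q₀ ∈ L¹(ℚ_p) and ∫_{ℤ_p}Q₀ = 1, and let W₀φ = Q₀ ∗ (fφ) with f(x) = Σ_{I∈G_M} f(I)·Ω(p^M|x−I|_p), f(I) > 0. If Ψ_{rnj} is a Kozyrev wavelet whose support is contained in the ball I+p^Mℤ_p for some I ∈ G_M, then Ψ_{rnj} is an eigenfunction of W₀ with W₀Ψ_{rnj} = Q̂₀(p^{1−r})·f(I)·Ψ_{rnj}. In particular the closed span of the wavelets supported in I+p^Mℤ_p is invariant under W₀. -/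
open MeasureTheory Filter
open scoped Real Topology ENNReal NNReal

namespace PadicES

variable (p : ℕ) [Fact p.Prime]

noncomputable instance : MeasurableSpace ℚ_[p] := borel _
instance : BorelSpace ℚ_[p] := ⟨rfl⟩
noncomputable instance : DecidableEq ℚ_[p] := Classical.decEq _

/-- The closed unit ball `ℤ_p` viewed as a subset of `ℚ_p`. -/
def unitBall : Set ℚ_[p] := {x : ℚ_[p] | ‖x‖ ≤ 1}

lemma isCompact_unitBall : IsCompact (unitBall p) := by
  have : unitBall p = Metric.closedBall (0 : ℚ_[p]) 1 := by
    ext x; simp [unitBall, Metric.mem_closedBall, dist_eq_norm]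
  rw [this]; exact isCompact_closedBall _ _

lemma interior_unitBall_nonempty : (interior (unitBall p)).Nonempty := by
  have : unitBall p = Metric.closedBall (0 : ℚ_[p]) 1 := by
    ext x; simp [unitBall, Metric.mem_closedBall, dist_eq_norm]
  rw [this, (IsUltrametricDist.isOpen_closedBall (0 : ℚ_[p]) one_ne_zero).interior_eq]
  exact ⟨0, by simp⟩

/-- The Haar measure `dx` on `(ℚ_p, +)`, normalized so that `ℤ_p` has measure `1`. -/
noncomputable def haar : Measure ℚ_[p] :=
  Measure.addHaarMeasure ⟨⟨unitBall p, isCompact_unitBall p⟩, interior_unitBall_nonempty p⟩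

lemma norm_scaled_le_one (y : ℚ_[p]) (h : ¬ ‖y‖ ≤ 1) :
    ‖(p : ℚ_[p]) ^ ((-y.valuation).toNat) * y‖ ≤ 1 := by
  have hy : y ≠ 0 := by rintro rfl; simp at h
  have hv : y.valuation < 0 := by
    by_contra hv
    push_neg at hv
    exact h ((Padic.norm_le_one_iff_val_nonneg (p := p) y).mpr hv)
  have hp0 : (0 : ℝ) < (p : ℝ) := by
    exact_mod_cast (Fact.out : p.Prime).pos
  rw [norm_mul, norm_pow, Padic.norm_p, Padic.norm_eq_zpow_neg_valuation hy]
  rw [inv_pow, ← zpow_natCast, Int.toNat_of_nonneg (by omega)]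
  rw [← zpow_neg, ← zpow_add₀ (ne_of_gt hp0)]
  simp

/-- The `p`-adic fractional part `{y}_p`, as a rational number. -/
noncomputable def fract (y : ℚ_[p]) : ℚ :=
  if h : ‖y‖ ≤ 1 then 0
  else
    ((PadicInt.toZModPow ((-y.valuation).toNat)
        (⟨(p : ℚ_[p]) ^ ((-y.valuation).toNat) * y, norm_scaled_le_one p y h⟩ :
          ℤ_[p])).val : ℚ) / (p : ℚ) ^ ((-y.valuation).toNat)

/-- The standard additive character `χ_p(y) = exp(2 π i {y}_p)` of `(ℚ_p,+)`. -/
noncomputable def stdChar (y : ℚ_[p]) : ℂ :=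
  Complex.exp (2 * (Real.pi : ℂ) * Complex.I * (fract p y : ℂ))

/-- The ball `a + p^R ℤ_p` of radius `p^{-R}` centered at `a`. -/
def ballSet (R : ℤ) (a : ℚ_[p]) : Set ℚ_[p] := {x : ℚ_[p] | ‖x - a‖ ≤ (p : ℝ) ^ (-R)}

/-- `Ω(p^R |x - a|_p)`: the indicator function of the ball `a + p^R ℤ_p` (complex valued). -/
noncomputable def ballInd (R : ℤ) (a x : ℚ_[p]) : ℂ := if ‖x - a‖ ≤ (p : ℝ) ^ (-R) then 1 else 0

/-- `Ω(p^R |x - a|_p)`: the indicator function of the ball `a + p^R ℤ_p` (real valued). -/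
noncomputable def ballIndR (R : ℤ) (a x : ℚ_[p]) : ℝ := if ‖x - a‖ ≤ (p : ℝ) ^ (-R) then 1 else 0

/-- The Kozyrev wavelet
`Ψ_{rnj}(x) = p^{-r/2} χ_p(p^{-1} j (p^r x - n)) Ω(|p^r x - n|_p)`. -/
noncomputable def wavelet (r : ℤ) (n : ℚ_[p]) (j : ℕ) (x : ℚ_[p]) : ℂ :=
  (((p : ℝ) ^ (-(r : ℝ) / 2) : ℝ) : ℂ) *
    stdChar p ((p : ℚ_[p])⁻¹ * (j : ℚ_[p]) * ((p : ℚ_[p]) ^ r * x - n)) *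
    ballInd p 0 0 ((p : ℚ_[p]) ^ r * x - n)

/-- The Fourier transform `ĝ(ξ) = ∫ χ_p(ξ x) g(x) dx` of a complex-valued function. -/
noncomputable def fourierT (g : ℚ_[p] → ℂ) (ξ : ℚ_[p]) : ℂ :=
  ∫ x, stdChar p (ξ * x) * g x ∂(haar p)

/-- A function on `ℚ_p` is radial if it only depends on `|x|_p`. -/
def IsRadial (g : ℚ_[p] → ℝ) : Prop := ∀ x y : ℚ_[p], ‖x‖ = ‖y‖ → g x = g y

/-- Convolution `(g ∗ φ)(x) = ∫ g(x - y) φ(y) dy` of a real kernel with a complex function. -/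
noncomputable def conv (g : ℚ_[p] → ℝ) (φ : ℚ_[p] → ℂ) (x : ℚ_[p]) : ℂ :=
  ∫ y, (g (x - y) : ℂ) * φ y ∂(haar p)

/-- Real-valued convolution. -/
noncomputable def convR (g φ : ℚ_[p] → ℝ) (x : ℚ_[p]) : ℝ :=
  ∫ y, g (x - y) * φ y ∂(haar p)

/-- The fitness function `f(x) = Σ_{I ∈ G_M} f(I) Ω(p^M |x - I|_p)`. -/
noncomputable def fitness (fc : ℚ_[p] → ℝ) (M : ℕ) (G : Finset ℚ_[p]) (x : ℚ_[p]) : ℝ :=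
  ∑ I ∈ G, fc I * ballIndR p M I x

/-- The matrix `W⁰` of the operator `W₀ φ = Q₀ ∗ (f φ)` on the span of the
indicator functions of the balls `I + p^M ℤ_p`, `I ∈ G_M`. -/
noncomputable def Wmat (Q₀ fc : ℚ_[p] → ℝ) (M : ℕ) (G : Finset ℚ_[p]) :
    Matrix {I : ℚ_[p] // I ∈ G} {I : ℚ_[p] // I ∈ G} ℝ :=
  fun I J =>
    if I = J then fc I.1 * ∫ z in ballSet p M 0, Q₀ z ∂(haar p)
    else fc I.1 * Q₀ (J.1 - I.1) * (p : ℝ) ^ (-(M : ℤ))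


/-- The operator `W₀ φ = Q₀ ∗ (f φ)` (complex-valued version). -/
noncomputable def Wop (Q₀ fc : ℚ_[p] → ℝ) (M : ℕ) (G : Finset ℚ_[p]) (φ : ℚ_[p] → ℂ)
    (x : ℚ_[p]) : ℂ :=
  conv p Q₀ (fun y => ((fitness p fc M G y : ℝ) : ℂ) * φ y) x

/-- The operator `W₀ φ = Q₀ ∗ (f φ)` (real-valued version). -/
noncomputable def WopR (Q₀ fc : ℚ_[p] → ℝ) (M : ℕ) (G : Finset ℚ_[p]) (φ : ℚ_[p] → ℝ)
    (x : ℚ_[p]) : ℝ :=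
  convR p Q₀ (fun y => fitness p fc M G y * φ y) x

/-- The `p`-adic heat kernel `Z(ξ; σ, α) = ∫ χ_p(ξ x) e^{-σ |x|_p^α} dx`. -/
noncomputable def heatK (σ α : ℝ) (ξ : ℚ_[p]) : ℂ :=
  ∫ x, stdChar p (ξ * x) * ((Real.exp (-σ * ‖x‖ ^ α) : ℝ) : ℂ) ∂(haar p)

/-! On its support ball `I + p^M ℤ_p` the wavelet only sees the constant value `f(I)` of the
fitness function, so `W₀ Ψ = f(I) (Q₀ ∗ Ψ)`. In `(Q₀ ∗ Ψ)(x) = ∫ Q₀(t) Ψ(x - t) dt` the factor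
`Ψ(x - t)` is a character `χ_p(ξ₀ t)`, `|ξ₀|_p = p^{1-r}`, times the indicator of a ball.
Replacing that indicator by its value at `t = 0` changes the integrand only where
`|t|_p > p^r`; there the translation `t ↦ t + p^{-r}` fixes `Q₀` (it is radial) and the
indicator, but multiplies the character by `χ_p(ξ₀ p^{-r}) ≠ 1`, so the change integrates to
zero. What remains is `Q̂₀(ξ₀) Ψ(x)`, and `Q̂₀` is radial because multiplication by a unit
preserves Haar measure. -/

theorem _root_.MeasureTheory.integral_eq_zero_of_add_right_eq_smul {G E 𝕜 : Type*}
    [MeasurableSpace G] [AddGroup G] [MeasurableAdd G] {μ : Measure G} [μ.IsAddRightInvariant]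
    [NormedAddCommGroup E] [NormedSpace ℝ E] [NormedDivisionRing 𝕜] [Module 𝕜 E]
    [NormSMulClass 𝕜 E] [SMulCommClass ℝ 𝕜 E] {f : G → E} {g : G} {c : 𝕜} (hc : c ≠ 1)
    (hf : ∀ x, f (x + g) = c • f x) : ∫ x, f x ∂μ = 0 := by
  have h := integral_add_right_eq_self f g (μ := μ)
  simp_rw [hf, integral_smul] at h
  have : (c - 1) • ∫ x, f x ∂μ = 0 := by rw [sub_smul, one_smul, h, sub_self]
  exact (smul_eq_zero.mp this).resolve_left (sub_ne_zero.mpr hc)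

lemma _root_.IsUltrametricDist.norm_add_le_iff {S : Type*} [SeminormedAddCommGroup S]
    [IsUltrametricDist S] {x y : S} {ρ : ℝ} (hy : ‖y‖ ≤ ρ) : ‖x + y‖ ≤ ρ ↔ ‖x‖ ≤ ρ := by
  refine ⟨fun h ↦ ?_, fun h ↦ (IsUltrametricDist.norm_add_le_max x y).trans (max_le h hy)⟩
  simpa using (IsUltrametricDist.norm_add_le_max (x + y) (-y)).trans (max_le h (by rwa [norm_neg]))

section

variable {p}

lemma fract_of_norm_le_one {y : ℚ_[p]} (h : ‖y‖ ≤ 1) : fract p y = 0 := dif_pos h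

lemma exists_pow_mul_fract_eq_intCast (y : ℚ_[p]) :
    ∃ (k : ℕ) (m : ℤ), (p : ℚ) ^ k * fract p y = m := by
  by_cases h : ‖y‖ ≤ 1
  · exact ⟨0, 0, by simp [fract_of_norm_le_one h]⟩
  · have hp : (p : ℚ) ≠ 0 := Nat.cast_ne_zero.mpr (Fact.out : p.Prime).ne_zero
    refine ⟨(-y.valuation).toNat, ((PadicInt.toZModPow (-y.valuation).toNat
      (⟨_, norm_scaled_le_one p y h⟩ : ℤ_[p])).val : ℤ), ?_⟩
    rw [fract, dif_neg h, mul_div_cancel₀ _ (pow_ne_zero _ hp)]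
    exact (Int.cast_natCast _).symm

lemma norm_sub_fract_le_one (y : ℚ_[p]) : ‖y - (fract p y : ℚ_[p])‖ ≤ 1 := by
  by_cases h : ‖y‖ ≤ 1
  · simpa [fract_of_norm_le_one h] using h
  set k := (-y.valuation).toNat
  set z : ℤ_[p] := ⟨(p : ℚ_[p]) ^ k * y, norm_scaled_le_one p y h⟩
  set m := (PadicInt.toZModPow k z).val
  have hp : (p : ℚ_[p]) ≠ 0 := Nat.cast_ne_zero.mpr (Fact.out : p.Prime).ne_zero
  have hzm : ‖z - (m : ℤ_[p])‖ ≤ (p : ℝ) ^ (-(k : ℤ)) := by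
    have : NeZero (p ^ k) := ⟨pow_ne_zero k (Fact.out : p.Prime).ne_zero⟩
    rw [PadicInt.norm_le_pow_iff_mem_span_pow, ← PadicInt.ker_toZModPow, RingHom.mem_ker,
      map_sub, map_natCast, ZMod.natCast_zmod_val, sub_self]
  have hy : y - (fract p y : ℚ_[p]) = (z - (m : ℤ_[p]) : ℤ_[p]) / (p : ℚ_[p]) ^ k := by
    rw [fract, dif_neg h, PadicInt.coe_sub, PadicInt.coe_natCast]
    push_cast
    rw [eq_div_iff (pow_ne_zero k hp), sub_mul, div_mul_cancel₀ _ (pow_ne_zero k hp), mul_comm]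
  rw [hy, norm_div, PadicInt.norm_def.symm, Padic.norm_p_pow,
    div_le_one (zpow_pos (by exact_mod_cast (Fact.out : p.Prime).pos) _)]
  exact hzm

lemma exists_intCast_eq_of_norm_le_one {q : ℚ} {k : ℕ} {m : ℤ} (hq : (p : ℚ) ^ k * q = m)
    (h : ‖(q : ℚ_[p])‖ ≤ 1) : ∃ t : ℤ, q = t := by
  have hm : ‖(m : ℚ_[p])‖ ≤ (p : ℝ) ^ (-(k : ℤ)) := by
    have : (m : ℚ_[p]) = (p : ℚ_[p]) ^ k * q := by exact_mod_cast hq.symm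
    rw [this, norm_mul, Padic.norm_p_pow]
    exact mul_le_of_le_one_right (by positivity) h
  obtain ⟨t, rfl⟩ := (Padic.norm_int_le_pow_iff_dvd m k).mp hm
  refine ⟨t, ?_⟩
  have hp : (p : ℚ) ^ k ≠ 0 := pow_ne_zero k (Nat.cast_ne_zero.mpr (Fact.out : p.Prime).ne_zero)
  apply mul_left_cancel₀ hp
  rw [hq]
  push_cast
  ring

lemma stdChar_of_norm_le_one {y : ℚ_[p]} (h : ‖y‖ ≤ 1) : stdChar p y = 1 := by
  simp [stdChar, fract_of_norm_le_one h]

lemma norm_stdChar (y : ℚ_[p]) : ‖stdChar p y‖ = 1 := by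
  simp [stdChar, Complex.norm_exp]

lemma stdChar_add (a b : ℚ_[p]) : stdChar p (a + b) = stdChar p a * stdChar p b := by
  set q := fract p a + fract p b - fract p (a + b)
  obtain ⟨k₁, m₁, h₁⟩ := exists_pow_mul_fract_eq_intCast a
  obtain ⟨k₂, m₂, h₂⟩ := exists_pow_mul_fract_eq_intCast b
  obtain ⟨k₃, m₃, h₃⟩ := exists_pow_mul_fract_eq_intCast (a + b)
  have hden : (p : ℚ) ^ (k₁ + k₂ + k₃) * q
      = ((m₁ * p ^ (k₂ + k₃) + m₂ * p ^ (k₁ + k₃) - m₃ * p ^ (k₁ + k₂) : ℤ) : ℚ) := by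
    push_cast
    simp only [pow_add]
    linear_combination (p : ℚ) ^ k₂ * p ^ k₃ * h₁ + (p : ℚ) ^ k₁ * p ^ k₃ * h₂
      - (p : ℚ) ^ k₁ * p ^ k₂ * h₃
  have hnorm : ‖(q : ℚ_[p])‖ ≤ 1 := by
    have hq : (q : ℚ_[p])
        = -(a - fract p a) + -(b - fract p b) + (a + b - fract p (a + b)) := by
      push_cast [q]
      ring
    rw [hq]
    refine (IsUltrametricDist.norm_add_le_max _ _).trans (max_le ?_ (norm_sub_fract_le_one _))
    refine (IsUltrametricDist.norm_add_le_max _ _).trans (max_le ?_ ?_) <;>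
      rw [norm_neg] <;> exact norm_sub_fract_le_one _
  obtain ⟨t, ht⟩ := exists_intCast_eq_of_norm_le_one hden hnorm
  have hsum : (fract p a : ℂ) + fract p b = fract p (a + b) + t := by
    exact_mod_cast (show fract p a + fract p b = fract p (a + b) + t by linarith)
  rw [stdChar, stdChar, stdChar, ← Complex.exp_add, ← mul_add, hsum, mul_add, Complex.exp_add,
    mul_comm _ (t : ℂ), Complex.exp_int_mul_two_pi_mul_I, mul_one]

lemma stdChar_ne_one {y : ℚ_[p]} (h : 1 < ‖y‖) : stdChar p y ≠ 1 := by
  intro hy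
  obtain ⟨t, ht⟩ := Complex.exp_eq_one_iff.mp hy
  have hfract : fract p y = t := by
    have h2πi : 2 * (π : ℂ) * Complex.I ≠ 0 := by simp [Real.pi_ne_zero]
    exact_mod_cast mul_left_cancel₀ h2πi (ht.trans (mul_comm _ _))
  have hy1 : ‖y‖ ≤ 1 := by
    have hyt := norm_sub_fract_le_one y
    rw [hfract, Rat.cast_intCast] at hyt
    calc ‖y‖ = ‖(y - t) + t‖ := by rw [sub_add_cancel]
      _ ≤ max ‖y - t‖ ‖(t : ℚ_[p])‖ := IsUltrametricDist.norm_add_le_max _ _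
      _ ≤ 1 := max_le hyt (Padic.norm_int_le_one t)
  exact hy1.not_gt h

lemma continuous_stdChar : Continuous (stdChar p) := by
  refine continuous_iff_continuousAt.mpr fun y ↦ EventuallyEq.continuousAt (y := stdChar p y) ?_
  filter_upwards [Metric.closedBall_mem_nhds y one_pos] with z hz
  have hzy : ‖z - y‖ ≤ 1 := by rwa [← dist_eq_norm]
  rw [← add_sub_cancel y z, stdChar_add, stdChar_of_norm_le_one hzy, mul_one]

instance : (haar p).IsAddHaarMeasure := Measure.isAddHaarMeasure_addHaarMeasure _

lemma measurePreserving_mul_left {a : ℚ_[p]} (ha : ‖a‖ = 1) :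
    MeasurePreserving (a * ·) (haar p) (haar p) := by
  have ha0 : a ≠ 0 := norm_ne_zero_iff.mp (ha ▸ one_ne_zero)
  let e := DistribMulAction.toAddEquiv ℚ_[p] (Units.mk0 a ha0)
  have : ((haar p).map (a * ·)).IsAddHaarMeasure :=
    e.isAddHaarMeasure_map _ (continuous_const_mul a) (continuous_const_mul a⁻¹)
  refine ⟨(continuous_const_mul a).measurable, ((Measure.addHaarMeasure_eq_iff _ _).2 ?_).symm⟩
  change (haar p).map (a * ·) (unitBall p) = 1
  have hpre : (a * ·) ⁻¹' unitBall p = unitBall p := by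
    ext t
    simp [unitBall, ha]
  rw [Measure.map_apply (continuous_const_mul a).measurable
    (isCompact_unitBall p).isClosed.measurableSet, hpre]
  exact Measure.addHaarMeasure_self

lemma fourierT_eq_of_norm_eq {Q : ℚ_[p] → ℝ} (hrad : IsRadial p Q) {ξ ξ' : ℚ_[p]}
    (h : ‖ξ‖ = ‖ξ'‖) : fourierT p (fun y ↦ (Q y : ℂ)) ξ = fourierT p (fun y ↦ (Q y : ℂ)) ξ' := by
  rcases eq_or_ne ξ 0 with rfl | hξ
  · rw [norm_zero, eq_comm, norm_eq_zero] at h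
    rw [h]
  set a := ξ' / ξ
  have ha : ‖a‖ = 1 := by rw [norm_div, ← h, div_self (norm_ne_zero_iff.mpr hξ)]
  have ha0 : a ≠ 0 := norm_ne_zero_iff.mp (ha ▸ one_ne_zero)
  rw [fourierT, fourierT, ← (measurePreserving_mul_left ha).integral_comp
    (Homeomorph.mulLeft₀ a ha0).measurableEmbedding]
  congr 1 with t
  rw [← mul_assoc, mul_div_cancel₀ _ hξ, hrad (a * t) t (by rw [norm_mul, ha, one_mul])]

lemma integrable_stdChar_mul_mul {Q : ℚ_[p] → ℝ} (hQ : Integrable Q (haar p)) (ξ : ℚ_[p])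
    {h : ℚ_[p] → ℂ} (hh : Measurable h) {C : ℝ} (hC : ∀ t, ‖h t‖ ≤ C) :
    Integrable (fun t ↦ stdChar p (ξ * t) * Q t * h t) (haar p) := by
  have hmeas : Measurable fun t ↦ stdChar p (ξ * t) * h t :=
    (continuous_stdChar.comp (continuous_const_mul ξ)).measurable.mul hh
  refine (hQ.ofReal.bdd_mul hmeas.aestronglyMeasurable (c := C) (ae_of_all _ fun t ↦ ?_)).congr
    (ae_of_all _ fun t ↦ by simp only [RCLike.ofReal_eq_complex_ofReal]; ring)
  simpa [norm_stdChar] using hC t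

/-- Translating by `s` multiplies the integrand by `χ_p(ξ s) ≠ 1`: off the ball of radius `‖s‖`,
where `h` vanishes, `‖t + s‖ = ‖t‖` and the radial `Q` does not change. -/
lemma integral_stdChar_mul_radial_mul_eq_zero {Q : ℚ_[p] → ℝ} (hrad : IsRadial p Q)
    {ξ s : ℚ_[p]} (hξs : 1 < ‖ξ * s‖) {h : ℚ_[p] → ℂ} (hper : ∀ t, h (t + s) = h t)
    (hzero : ∀ t, ‖t‖ ≤ ‖s‖ → h t = 0) :
    ∫ t, stdChar p (ξ * t) * Q t * h t ∂haar p = 0 := by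
  refine integral_eq_zero_of_add_right_eq_smul (g := s) (stdChar_ne_one hξs) fun t ↦ ?_
  rw [smul_eq_mul, mul_add, stdChar_add, hper]
  rcases le_or_gt ‖t‖ ‖s‖ with hts | hts
  · simp [hzero t hts]
  · rw [hrad (t + s) t (by
      rw [IsUltrametricDist.norm_add_eq_max_of_norm_ne_norm hts.ne', max_eq_left hts.le])]
    ring

lemma ballInd_sub {R : ℤ} {a b : ℚ_[p]} (hb : ‖b‖ ≤ (p : ℝ) ^ (-R)) (x : ℚ_[p]) :
    ballInd p R a (x - b) = ballInd p R a x := by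
  have hb' : ‖-b‖ ≤ (p : ℝ) ^ (-R) := by rwa [norm_neg]
  simp only [ballInd, sub_right_comm x b a, sub_eq_add_neg (x - a) b,
    IsUltrametricDist.norm_add_le_iff hb']

lemma measurable_ballInd (R : ℤ) (a : ℚ_[p]) : Measurable (ballInd p R a) :=
  Measurable.ite (measurableSet_le (by fun_prop) measurable_const) measurable_const
    measurable_const

lemma integral_stdChar_mul_radial_mul_ballInd {Q : ℚ_[p] → ℝ} (hrad : IsRadial p Q)
    (hQ : Integrable Q (haar p)) {a ξ : ℚ_[p]} (ha : a ≠ 0) (haξ : ‖a‖ < ‖ξ‖) (u : ℚ_[p]) :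
    ∫ t, stdChar p (ξ * t) * Q t * ballInd p 0 0 (u - a * t) ∂haar p
      = ballInd p 0 0 u * fourierT p (fun y ↦ (Q y : ℂ)) ξ := by
  set h : ℚ_[p] → ℂ := fun t ↦ ballInd p 0 0 (u - a * t) - ballInd p 0 0 u
  have hnorm : ∀ w, ‖ballInd p 0 0 w‖ ≤ 1 := fun w ↦ by unfold ballInd; split_ifs <;> simp
  have hmeas : Measurable h := ((measurable_ballInd 0 0).comp (by fun_prop)).sub measurable_const
  have hbdd : ∀ t, ‖h t‖ ≤ 1 + 1 :=
    fun t ↦ (norm_sub_le _ _).trans (add_le_add (hnorm _) (hnorm _))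
  have hξa : 1 < ‖ξ * a⁻¹‖ := by
    rwa [norm_mul, norm_inv, ← div_eq_mul_inv, one_lt_div (norm_pos_iff.mpr ha)]
  have hh : ∫ t, stdChar p (ξ * t) * Q t * h t ∂haar p = 0 := by
    refine integral_stdChar_mul_radial_mul_eq_zero hrad hξa (fun t ↦ ?_) fun t ht ↦ ?_
    · simp only [h, mul_add, mul_inv_cancel₀ ha, ← sub_sub,
        ballInd_sub (R := 0) (b := 1) (by simp)]
    · have hat : ‖a * t‖ ≤ (p : ℝ) ^ (-(0 : ℤ)) := by
        rw [neg_zero, zpow_zero, norm_mul, ← mul_inv_cancel₀ (norm_ne_zero_iff.mpr ha),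
          ← norm_inv]
        exact mul_le_mul_of_nonneg_left ht (norm_nonneg a)
      simp only [h, ballInd_sub hat, sub_self]
  calc ∫ t, stdChar p (ξ * t) * Q t * ballInd p 0 0 (u - a * t) ∂haar p
      = ∫ t, (stdChar p (ξ * t) * Q t * h t
          + stdChar p (ξ * t) * Q t * ballInd p 0 0 u) ∂haar p := by
        congr 1 with t
        ring
    _ = ballInd p 0 0 u * fourierT p (fun y ↦ (Q y : ℂ)) ξ := by
        rw [integral_add (integrable_stdChar_mul_mul hQ ξ hmeas hbdd)
          (integrable_stdChar_mul_mul hQ ξ measurable_const fun _ ↦ hnorm u), hh, zero_add,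
          fourierT, ← integral_const_mul]
        congr 1 with t
        ring

lemma conv_const_mul (Q : ℚ_[p] → ℝ) (c : ℂ) (φ : ℚ_[p] → ℂ) (x : ℚ_[p]) :
    conv p Q (fun y ↦ c * φ y) x = c * conv p Q φ x := by
  rw [conv, conv, ← integral_const_mul]
  congr 1 with y
  ring

lemma conv_wavelet {Q : ℚ_[p] → ℝ} (hrad : IsRadial p Q) (hQ : Integrable Q (haar p))
    {r : ℤ} (n : ℚ_[p]) {j : ℕ} (hj : ‖(j : ℚ_[p])‖ = 1) {ξ : ℚ_[p]}
    (hξ : ‖ξ‖ = (p : ℝ) ^ (1 - r)) (x : ℚ_[p]) :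
    conv p Q (wavelet p r n j) x = fourierT p (fun y ↦ (Q y : ℂ)) ξ * wavelet p r n j x := by
  have hp : (p : ℚ_[p]) ≠ 0 := Nat.cast_ne_zero.mpr (Fact.out : p.Prime).ne_zero
  have hp1 : (1 : ℝ) < p := by exact_mod_cast (Fact.out : p.Prime).one_lt
  set c := (p : ℚ_[p])⁻¹ * j
  set u := (p : ℚ_[p]) ^ r * x - n
  set C : ℂ := (((p : ℝ) ^ (-(r : ℝ) / 2) : ℝ) : ℂ)
  -- the frequency of `t ↦ Ψ(x - t)`
  set ξ₀ := -(c * (p : ℚ_[p]) ^ r)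
  have hξ₀ : ‖ξ₀‖ = (p : ℝ) ^ (1 - r) := by
    rw [norm_neg, norm_mul, norm_mul, norm_inv, Padic.norm_p, hj, Padic.norm_p_zpow, inv_inv,
      mul_one, zpow_sub₀ (by positivity), zpow_one, div_eq_mul_inv, zpow_neg]
  have hlt : ‖(p : ℚ_[p]) ^ r‖ < ‖ξ₀‖ := by
    rw [hξ₀, Padic.norm_p_zpow, sub_eq_add_neg, zpow_add₀ (by positivity), zpow_one]
    exact lt_mul_of_one_lt_left (by positivity) hp1
  have hshift : ∀ t, wavelet p r n j (x - t) = C * stdChar p (c * u)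
      * (stdChar p (ξ₀ * t) * ballInd p 0 0 (u - (p : ℚ_[p]) ^ r * t)) := by
    intro t
    have harg : (p : ℚ_[p])⁻¹ * j * ((p : ℚ_[p]) ^ r * (x - t) - n) = c * u + ξ₀ * t := by ring
    have hball : (p : ℚ_[p]) ^ r * (x - t) - n = u - (p : ℚ_[p]) ^ r * t := by ring
    rw [wavelet, harg, hball, stdChar_add]
    ring
  calc conv p Q (wavelet p r n j) x
      = ∫ t, (Q t : ℂ) * wavelet p r n j (x - t) ∂haar p := by
        rw [conv, ← integral_sub_left_eq_self _ (haar p) x]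
        simp only [sub_sub_cancel]
    _ = C * stdChar p (c * u) * ∫ t, stdChar p (ξ₀ * t) * Q t
          * ballInd p 0 0 (u - (p : ℚ_[p]) ^ r * t) ∂haar p := by
        rw [← integral_const_mul]
        congr 1 with t
        rw [hshift]
        ring
    _ = fourierT p (fun y ↦ (Q y : ℂ)) ξ * wavelet p r n j x := by
        rw [integral_stdChar_mul_radial_mul_ballInd hrad hQ (zpow_ne_zero r hp) hlt,
          fourierT_eq_of_norm_eq hrad (hξ₀.trans hξ.symm), wavelet]
        ring

lemma norm_le_one_of_mem_ballSet {M : ℕ} {I y : ℚ_[p]} (hI : ‖I‖ ≤ 1)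
    (hy : y ∈ ballSet p M I) : ‖y‖ ≤ 1 := by
  have hpM : (p : ℝ) ^ (-(M : ℤ)) ≤ 1 :=
    zpow_le_one_of_nonpos₀ (by exact_mod_cast (Fact.out : p.Prime).one_le) (by omega)
  rw [← sub_add_cancel y I]
  exact (IsUltrametricDist.norm_add_le_max _ _).trans (max_le (hy.trans hpM) hI)

lemma fitness_eq {fc : ℚ_[p] → ℝ} {M : ℕ} {G : Finset ℚ_[p]} {I y : ℚ_[p]} (hI : I ∈ G)
    (hy : ‖y - I‖ ≤ (p : ℝ) ^ (-(M : ℤ)))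
    (huniq : ∀ J ∈ G, ‖y - J‖ ≤ (p : ℝ) ^ (-(M : ℤ)) → J = I) :
    fitness p fc M G y = fc I := by
  rw [fitness, Finset.sum_eq_single_of_mem I hI fun J hJ hJI ↦ ?_]
  · rw [ballIndR, if_pos hy, mul_one]
  · rw [ballIndR, if_neg fun hyJ ↦ hJI (huniq J hJ hyJ), mul_zero]

lemma fitness_mul_of_support_subset {fc : ℚ_[p] → ℝ} {M : ℕ} {G : Finset ℚ_[p]}
    (hGsub : ∀ I ∈ G, ‖I‖ ≤ 1)
    (hG : ∀ x : ℚ_[p], ‖x‖ ≤ 1 → ∃! I : ℚ_[p], I ∈ G ∧ ‖x - I‖ ≤ (p : ℝ) ^ (-(M : ℤ)))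
    {I : ℚ_[p]} (hI : I ∈ G) {φ : ℚ_[p] → ℂ} (hφ : Function.support φ ⊆ ballSet p M I)
    (y : ℚ_[p]) : (fitness p fc M G y : ℂ) * φ y = fc I * φ y := by
  by_cases hy : φ y = 0
  · rw [hy, mul_zero, mul_zero]
  have hyI : ‖y - I‖ ≤ (p : ℝ) ^ (-(M : ℤ)) := hφ hy
  obtain ⟨K, -, hK⟩ := hG y (norm_le_one_of_mem_ballSet (hGsub I hI) hyI)
  rw [fitness_eq hI hyI fun J hJ hyJ ↦ (hK J ⟨hJ, hyJ⟩).trans (hK I ⟨hI, hyI⟩).symm]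

end

theorem Wop_wavelet_eigenfunction_general (p : ℕ) [Fact p.Prime] (Q₀ : ℚ_[p] → ℝ)
    (hrad : IsRadial p Q₀)
    (hint : Integrable Q₀ (haar p))
    (M : ℕ) (G : Finset ℚ_[p])
    (hGsub : ∀ I ∈ G, ‖I‖ ≤ 1)
    (hG : ∀ x : ℚ_[p], ‖x‖ ≤ 1 → ∃! I : ℚ_[p], I ∈ G ∧ ‖x - I‖ ≤ (p : ℝ) ^ (-(M : ℤ)))
    (fc : ℚ_[p] → ℝ)
    (I : {I : ℚ_[p] // I ∈ G}) (r : ℤ) (n : ℚ_[p]) (j : ℕ) (hj1 : 1 ≤ j) (hj2 : j ≤ p - 1)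
    (hsuppw : Function.support (wavelet p r n j) ⊆ ballSet p M I.1) :
    ∀ ξ : ℚ_[p], ‖ξ‖ = (p : ℝ) ^ (1 - r) →
      ∀ x : ℚ_[p],
        Wop p Q₀ fc M G (wavelet p r n j) x =
          fourierT p (fun y => (Q₀ y : ℂ)) ξ * (fc I.1 : ℂ) * wavelet p r n j x := by
  intro ξ hξ x
  have hp : p.Prime := Fact.out
  have hj : ‖(j : ℚ_[p])‖ = 1 :=
    Padic.norm_natCast_eq_one_iff.mpr (Nat.coprime_of_lt_prime (by omega) (by omega) hp)
  rw [Wop, funext (fitness_mul_of_support_subset hGsub hG I.2 hsuppw), conv_const_mul,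
    conv_wavelet hrad hint n hj hξ]
  ring

/-- A Kozyrev wavelet supported in a ball `I + p^Mℤ_p`, `I ∈ G_M`, is an
eigenfunction of `W₀ φ = Q₀ ∗ (f φ)` with eigenvalue `Q̂₀(p^{1-r}) f(I)`. -/
theorem Wop_wavelet_eigenfunction (p : ℕ) [Fact p.Prime] (Q₀ : ℚ_[p] → ℝ)
    (hpos : ∀ x : ℚ_[p], 0 ≤ Q₀ x)
    (hrad : IsRadial p Q₀)
    (hsupp : ∀ x : ℚ_[p], ¬ ‖x‖ ≤ 1 → Q₀ x = 0)
    (hint : Integrable Q₀ (haar p))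
    (hone : ∫ x in unitBall p, Q₀ x ∂(haar p) = 1)
    (M : ℕ) (hM : 1 ≤ M) (G : Finset ℚ_[p])
    (hGsub : ∀ I ∈ G, ‖I‖ ≤ 1)
    (hG : ∀ x : ℚ_[p], ‖x‖ ≤ 1 → ∃! I : ℚ_[p], I ∈ G ∧ ‖x - I‖ ≤ (p : ℝ) ^ (-(M : ℤ)))
    (fc : ℚ_[p] → ℝ) (hfc : ∀ I ∈ G, 0 < fc I)
    (I : {I : ℚ_[p] // I ∈ G}) (r : ℤ) (n : ℚ_[p]) (j : ℕ) (hj1 : 1 ≤ j) (hj2 : j ≤ p - 1)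
    (hsuppw : Function.support (wavelet p r n j) ⊆ ballSet p M I.1) :
    ∀ ξ : ℚ_[p], ‖ξ‖ = (p : ℝ) ^ (1 - r) →
      ∀ x : ℚ_[p],
        Wop p Q₀ fc M G (wavelet p r n j) x =
          fourierT p (fun y => (Q₀ y : ℂ)) ξ * (fc I.1 : ℂ) * wavelet p r n j x :=
  Wop_wavelet_eigenfunction_general p Q₀ hrad hint M G hGsub hG fc I r n j hj1 hj2 hsuppw

end PadicES
end

section
/- Assume Hypothesis A: ∫_{p^Mℤ_p} Q₀(|z|_p)dz ∈ (1/2, 1). Then the matrix W⁰ is strictly diagonally dominant with positive diagonal entries, i.e. W⁰_{II} > Σ_{J≠I}|W⁰_{IJ}| for every I ∈ G_M; consequently W⁰ is nonsingular and every eigenvalue of W⁰ has positive real part, and if W⁰ is moreover symmetric then all its eigenvalues are positive. -/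
open MeasureTheory Filter
open scoped Real Topology ENNReal NNReal

namespace PadicES

variable (p : ℕ) [Fact p.Prime]

/-!
Every entry of row `I` of `W⁰` is `f(I)` times the integral of `Q₀` over one of the balls
`J - I + p^M ℤ_p`, `J ∈ G_M`: for `J ≠ I` this ball has Haar measure `p^{-M}` and lies in the
sphere `|z|_p = |J - I|_p`, on which the radial `Q₀` is constant. These balls partition `ℤ_p`, so
row `I` sums to `f(I)`; the off-diagonal entries therefore sum to `f(I)(1 - A)`, less than the
diagonal entry `f(I) A` as soon as `A > 1/2`. The spectral statements follow from Gershgorin's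
circle theorem.
-/

section StrictlyDiagDominant

variable {n : Type*} [Fintype n] [DecidableEq n]

theorem _root_.Matrix.re_pos_of_mem_spectrum {K : Type*} [RCLike K] {A : Matrix n n K}
    (hA : ∀ k, ∑ j ∈ Finset.univ.erase k, ‖A k j‖ < RCLike.re (A k k)) {μ : K}
    (hμ : μ ∈ spectrum K A) : 0 < RCLike.re μ := by
  rw [← Matrix.spectrum_toLin', ← Module.End.hasEigenvalue_iff_mem_spectrum] at hμ
  obtain ⟨k, hk⟩ := eigenvalue_mem_ball hμ
  rw [mem_closedBall_iff_norm, norm_sub_rev] at hk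
  have hre : RCLike.re (A k k) - RCLike.re μ ≤ ‖A k k - μ‖ := by
    simpa using RCLike.re_le_norm (A k k - μ)
  linarith [hA k]

variable {A : Matrix n n ℝ}

theorem _root_.Matrix.pos_of_mem_spectrum_of_sum_abs_lt_diag
    (hA : ∀ k, ∑ j ∈ Finset.univ.erase k, |A k j| < A k k) {μ : ℝ} (hμ : μ ∈ spectrum ℝ A) :
    0 < μ :=
  Matrix.re_pos_of_mem_spectrum (K := ℝ) (by simpa using hA) hμ

theorem _root_.Matrix.re_pos_of_mem_spectrum_map_ofReal
    (hA : ∀ k, ∑ j ∈ Finset.univ.erase k, |A k j| < A k k) {z : ℂ}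
    (hz : z ∈ spectrum ℂ (A.map Complex.ofReal)) : 0 < z.re :=
  Matrix.re_pos_of_mem_spectrum (by simpa using hA) hz

theorem _root_.Matrix.isUnit_of_sum_abs_lt_diag
    (hA : ∀ k, ∑ j ∈ Finset.univ.erase k, |A k j| < A k k) : IsUnit A :=
  (spectrum.zero_notMem_iff ℝ).mp fun h0 =>
    (Matrix.pos_of_mem_spectrum_of_sum_abs_lt_diag hA h0).false

end StrictlyDiagDominant

lemma haar_unitBall : haar p (unitBall p) = 1 :=
  Measure.addHaarMeasure_self

instance : (haar p).IsAddLeftInvariant := Measure.isAddLeftInvariant_addHaarMeasure _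

lemma ballSet_eq_closedBall (R : ℤ) (a : ℚ_[p]) :
    ballSet p R a = Metric.closedBall a ((p : ℝ) ^ (-R)) := by
  ext x; simp [ballSet, dist_eq_norm]

lemma measurableSet_ballSet (R : ℤ) (a : ℚ_[p]) : MeasurableSet (ballSet p R a) := by
  rw [ballSet_eq_closedBall]; exact measurableSet_closedBall

lemma haar_ballSet_eq_haar_ballSet_zero (R : ℤ) (a : ℚ_[p]) :
    haar p (ballSet p R a) = haar p (ballSet p R 0) := by
  have h : ballSet p R a = (fun x => -a + x) ⁻¹' ballSet p R 0 := by
    ext x; simp [ballSet, neg_add_eq_sub]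
  rw [h, measure_preimage_add]

lemma ballSet_subset_unitBall (k : ℕ) {a : ℚ_[p]} (ha : ‖a‖ ≤ 1) :
    ballSet p k a ⊆ unitBall p := fun x hx =>
  calc ‖x‖ = ‖(x - a) + a‖ := by rw [sub_add_cancel]
    _ ≤ max ‖x - a‖ ‖a‖ := Padic.nonarchimedean _ _
    _ ≤ 1 := max_le (hx.trans (zpow_le_one_of_nonpos₀
      (by exact_mod_cast (Fact.out : p.Prime).one_lt.le) (by omega))) ha

lemma unitBall_eq_biUnion_ballSet_natCast (k : ℕ) :
    unitBall p = ⋃ j ∈ Finset.range (p ^ k), ballSet p k (j : ℚ_[p]) := by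
  refine Set.Subset.antisymm (fun x hx => ?_) (Set.iUnion₂_subset fun j _ =>
    ballSet_subset_unitBall p k (by simpa using Padic.norm_int_le_one (p := p) j))
  set z : ℤ_[p] := ⟨x, hx⟩
  exact Set.mem_biUnion (Finset.mem_coe.mpr (Finset.mem_range.mpr (z.appr_lt k)))
    ((PadicInt.norm_le_pow_iff_mem_span_pow _ k).mpr (z.appr_spec k))

lemma pairwiseDisjoint_ballSet_natCast (k : ℕ) :
    (Finset.range (p ^ k) : Set ℕ).PairwiseDisjoint fun j => ballSet p k (j : ℚ_[p]) := by
  intro i hi j hj hij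
  simp only [Function.onFun, ballSet_eq_closedBall]
  refine (IsUltrametricDist.closedBall_eq_or_disjoint _ _ _).resolve_left fun h => hij ?_
  have hmem : (i : ℚ_[p]) ∈ Metric.closedBall (j : ℚ_[p]) ((p : ℝ) ^ (-(k : ℤ))) :=
    h ▸ Metric.mem_closedBall_self (by positivity)
  rw [Metric.mem_closedBall, dist_eq_norm, ← Int.cast_natCast, ← Int.cast_natCast (R := ℚ_[p]) j,
    ← Int.cast_sub, Padic.norm_int_le_pow_iff_dvd] at hmem
  simp only [Finset.coe_range, Set.mem_Iio] at hi hj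
  have hmod : j ≡ i [MOD p ^ k] := Nat.modEq_iff_dvd.mpr (by exact_mod_cast hmem)
  exact (hmod.eq_of_lt_of_lt hj hi).symm

lemma haar_ballSet_natCast (k : ℕ) (a : ℚ_[p]) :
    haar p (ballSet p k a) = ((p : ℝ≥0∞) ^ k)⁻¹ := by
  have hcount : (p : ℝ≥0∞) ^ k * haar p (ballSet p k 0) = 1 := by
    rw [← haar_unitBall p, unitBall_eq_biUnion_ballSet_natCast p k,
      measure_biUnion_finset (pairwiseDisjoint_ballSet_natCast p k)
        fun j _ => measurableSet_ballSet p _ _]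
    simp [haar_ballSet_eq_haar_ballSet_zero p k]
  rw [haar_ballSet_eq_haar_ballSet_zero]
  exact ENNReal.eq_inv_of_mul_eq_one_left (by rwa [mul_comm])

lemma measureReal_ballSet_natCast (k : ℕ) (a : ℚ_[p]) :
    (haar p).real (ballSet p k a) = (p : ℝ) ^ (-(k : ℤ)) := by
  simp [measureReal_def, haar_ballSet_natCast]

lemma setIntegral_ballSet_of_lt_norm {g : ℚ_[p] → ℝ} (hg : IsRadial p g) (k : ℕ) {c : ℚ_[p]}
    (hc : (p : ℝ) ^ (-(k : ℤ)) < ‖c‖) :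
    ∫ z in ballSet p k c, g z ∂(haar p) = g c * (p : ℝ) ^ (-(k : ℤ)) := by
  have hconst : Set.EqOn g (fun _ => g c) (ballSet p k c) := fun z hz => by
    have hzc : ‖z + -c‖ < ‖-c‖ := by simpa [← sub_eq_add_neg] using hz.trans_lt hc
    exact hg z c (by simpa using Padic.norm_eq_of_norm_add_lt_right hzc)
  rw [setIntegral_congr_fun (measurableSet_ballSet p _ c) hconst, setIntegral_const,
    measureReal_ballSet_natCast, smul_eq_mul, mul_comm]

def IsResidueSystem (M : ℕ) (G : Finset ℚ_[p]) : Prop :=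
  (∀ I ∈ G, ‖I‖ ≤ 1) ∧
    ∀ x : ℚ_[p], ‖x‖ ≤ 1 → ∃! I : ℚ_[p], I ∈ G ∧ ‖x - I‖ ≤ (p : ℝ) ^ (-(M : ℤ))

section ResidueSystem

variable {M : ℕ} {G : Finset ℚ_[p]}

lemma lt_norm_sub_of_ne (hG : IsResidueSystem p M G) {I J : ℚ_[p]} (hI : I ∈ G) (hJ : J ∈ G)
    (hIJ : I ≠ J) : (p : ℝ) ^ (-(M : ℤ)) < ‖J - I‖ := by
  by_contra! h
  obtain ⟨K, -, hK⟩ := hG.2 J (hG.1 J hJ)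
  exact hIJ ((hK I ⟨hI, h⟩).trans (hK J ⟨hJ, by simp⟩).symm)

lemma unitBall_eq_biUnion_ballSet_sub (hG : IsResidueSystem p M G) {I : ℚ_[p]} (hI : ‖I‖ ≤ 1) :
    unitBall p = ⋃ J ∈ G, ballSet p M (J - I) := by
  have hcenter : ∀ J ∈ G, ‖J - I‖ ≤ 1 := fun J hJ => by
    simpa [sub_eq_add_neg] using
      (Padic.nonarchimedean J (-I)).trans (max_le (hG.1 J hJ) (by rwa [norm_neg]))
  refine Set.Subset.antisymm (fun x hx => ?_) (Set.iUnion₂_subset fun J hJ =>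
    ballSet_subset_unitBall p M (hcenter J hJ))
  obtain ⟨J, ⟨hJ, hxJ⟩, -⟩ := hG.2 (x + I) ((Padic.nonarchimedean _ _).trans (max_le hx hI))
  exact Set.mem_biUnion hJ (by simpa [ballSet, sub_sub_eq_add_sub] using hxJ)

lemma pairwiseDisjoint_ballSet_sub (hG : IsResidueSystem p M G) (I : ℚ_[p]) :
    (G : Set ℚ_[p]).PairwiseDisjoint fun J => ballSet p M (J - I) := by
  intro J hJ J' hJ' hJJ'
  simp only [Function.onFun, ballSet_eq_closedBall]
  refine (IsUltrametricDist.closedBall_eq_or_disjoint _ _ _).resolve_left fun h => ?_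
  have hmem : J - I ∈ Metric.closedBall (J' - I) ((p : ℝ) ^ (-(M : ℤ))) :=
    h ▸ Metric.mem_closedBall_self (by positivity)
  rw [Metric.mem_closedBall, dist_eq_norm, sub_sub_sub_cancel_right] at hmem
  exact (lt_norm_sub_of_ne p hG hJ' hJ (Ne.symm hJJ')).not_ge hmem

lemma sum_setIntegral_ballSet_sub (hG : IsResidueSystem p M G) {g : ℚ_[p] → ℝ}
    (hg : Integrable g (haar p)) {I : ℚ_[p]} (hI : ‖I‖ ≤ 1) :
    ∑ J ∈ G, ∫ z in ballSet p M (J - I), g z ∂(haar p) = ∫ z in unitBall p, g z ∂(haar p) := by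
  rw [unitBall_eq_biUnion_ballSet_sub p hG hI, integral_biUnion_finset G
    (fun J _ => measurableSet_ballSet p _ _) (pairwiseDisjoint_ballSet_sub p hG I)
    fun J _ => hg.integrableOn]

lemma Wmat_apply_eq_mul_setIntegral {Q₀ : ℚ_[p] → ℝ} (hrad : IsRadial p Q₀) (fc : ℚ_[p] → ℝ)
    (hG : IsResidueSystem p M G) (I J : {I : ℚ_[p] // I ∈ G}) :
    Wmat p Q₀ fc M G I J = fc I * ∫ z in ballSet p M (J.1 - I.1), Q₀ z ∂(haar p) := by
  by_cases hIJ : I = J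
  · simp [Wmat, hIJ]
  · have hne : I.1 ≠ J.1 := fun h => hIJ (Subtype.ext h)
    rw [setIntegral_ballSet_of_lt_norm p hrad M (lt_norm_sub_of_ne p hG I.2 J.2 hne)]
    simp [Wmat, hIJ, mul_assoc]

lemma sum_Wmat_row {Q₀ : ℚ_[p] → ℝ} (hrad : IsRadial p Q₀) (hint : Integrable Q₀ (haar p))
    (fc : ℚ_[p] → ℝ) (hG : IsResidueSystem p M G) (I : {I : ℚ_[p] // I ∈ G}) :
    ∑ J, Wmat p Q₀ fc M G I J = fc I * ∫ z in unitBall p, Q₀ z ∂(haar p) := by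
  simp_rw [Wmat_apply_eq_mul_setIntegral p hrad fc hG, ← Finset.mul_sum]
  rw [Finset.sum_coe_sort G fun J => ∫ z in ballSet p M (J - I.1), Q₀ z ∂(haar p),
    sum_setIntegral_ballSet_sub p hG hint (hG.1 I I.2)]

lemma Wmat_sum_abs_offDiag_lt_diag {Q₀ : ℚ_[p] → ℝ} (hpos : ∀ x, 0 ≤ Q₀ x)
    (hrad : IsRadial p Q₀) (hint : Integrable Q₀ (haar p))
    (hone : ∫ x in unitBall p, Q₀ x ∂(haar p) = 1) (hG : IsResidueSystem p M G)
    {fc : ℚ_[p] → ℝ} (hfc : ∀ I ∈ G, 0 < fc I)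
    (hA : 1 / 2 < ∫ z in ballSet p M 0, Q₀ z ∂(haar p)) (I : {I : ℚ_[p] // I ∈ G}) :
    0 < Wmat p Q₀ fc M G I I ∧
      ∑ J ∈ Finset.univ.erase I, |Wmat p Q₀ fc M G I J| < Wmat p Q₀ fc M G I I := by
  have hfcI := hfc I I.2
  have hdiag : Wmat p Q₀ fc M G I I = fc I * ∫ z in ballSet p M 0, Q₀ z ∂(haar p) := by
    simp [Wmat]
  have hnonneg : ∀ J, 0 ≤ Wmat p Q₀ fc M G I J := fun J => by
    rw [Wmat_apply_eq_mul_setIntegral p hrad fc hG]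
    exact mul_nonneg hfcI.le (setIntegral_nonneg (measurableSet_ballSet p _ _) fun x _ => hpos x)
  have hrow := sum_Wmat_row p hrad hint fc hG I
  rw [hone, mul_one] at hrow
  rw [Finset.sum_congr rfl fun J _ => abs_of_nonneg (hnonneg J),
    Finset.sum_erase_eq_sub (Finset.mem_univ I), hrow, hdiag]
  constructor <;> nlinarith

end ResidueSystem

theorem Wmat_diagonally_dominant_general (p : ℕ) [Fact p.Prime] (Q₀ : ℚ_[p] → ℝ)
    (hpos : ∀ x : ℚ_[p], 0 ≤ Q₀ x)
    (hrad : IsRadial p Q₀)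
    (hint : Integrable Q₀ (haar p))
    (hone : ∫ x in unitBall p, Q₀ x ∂(haar p) = 1)
    (M : ℕ) (G : Finset ℚ_[p])
    (hGsub : ∀ I ∈ G, ‖I‖ ≤ 1)
    (hG : ∀ x : ℚ_[p], ‖x‖ ≤ 1 → ∃! I : ℚ_[p], I ∈ G ∧ ‖x - I‖ ≤ (p : ℝ) ^ (-(M : ℤ)))
    (fc : ℚ_[p] → ℝ) (hfc : ∀ I ∈ G, 0 < fc I)
    (hA : (∫ z in ballSet p M 0, Q₀ z ∂(haar p)) ∈ Set.Ioo (1/2 : ℝ) 1) :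
    (∀ I : {I : ℚ_[p] // I ∈ G},
      (0 < Wmat p Q₀ fc M G I I ∧
        ∑ J ∈ Finset.univ.erase I, |Wmat p Q₀ fc M G I J| < Wmat p Q₀ fc M G I I)) ∧
    IsUnit (Wmat p Q₀ fc M G) ∧
    (∀ z ∈ spectrum ℂ ((Wmat p Q₀ fc M G).map Complex.ofReal), 0 < z.re) ∧
    ((Wmat p Q₀ fc M G).IsSymm → ∀ μ ∈ spectrum ℝ (Wmat p Q₀ fc M G), 0 < μ) := by
  have hrows := Wmat_sum_abs_offDiag_lt_diag p hpos hrad hint hone ⟨hGsub, hG⟩ hfc hA.1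
  have hdom := fun I => (hrows I).2
  exact ⟨hrows, Matrix.isUnit_of_sum_abs_lt_diag hdom,
    fun _ => Matrix.re_pos_of_mem_spectrum_map_ofReal hdom,
    fun _ _ => Matrix.pos_of_mem_spectrum_of_sum_abs_lt_diag hdom⟩

/-- Under Hypothesis A, the matrix `W⁰` is strictly diagonally dominant with
positive diagonal, hence nonsingular, all its eigenvalues have positive real part, and if it
is symmetric then all its eigenvalues are positive. -/
theorem Wmat_diagonally_dominant (p : ℕ) [Fact p.Prime] (Q₀ : ℚ_[p] → ℝ)
    (hpos : ∀ x : ℚ_[p], 0 ≤ Q₀ x)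
    (hrad : IsRadial p Q₀)
    (hsupp : ∀ x : ℚ_[p], ¬ ‖x‖ ≤ 1 → Q₀ x = 0)
    (hint : Integrable Q₀ (haar p))
    (hone : ∫ x in unitBall p, Q₀ x ∂(haar p) = 1)
    (M : ℕ) (hM : 1 ≤ M) (G : Finset ℚ_[p])
    (hGsub : ∀ I ∈ G, ‖I‖ ≤ 1)
    (hG : ∀ x : ℚ_[p], ‖x‖ ≤ 1 → ∃! I : ℚ_[p], I ∈ G ∧ ‖x - I‖ ≤ (p : ℝ) ^ (-(M : ℤ)))
    (fc : ℚ_[p] → ℝ) (hfc : ∀ I ∈ G, 0 < fc I)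
    (hA : (∫ z in ballSet p M 0, Q₀ z ∂(haar p)) ∈ Set.Ioo (1/2 : ℝ) 1) :
    (∀ I : {I : ℚ_[p] // I ∈ G},
      (0 < Wmat p Q₀ fc M G I I ∧
        ∑ J ∈ Finset.univ.erase I, |Wmat p Q₀ fc M G I J| < Wmat p Q₀ fc M G I I)) ∧
    IsUnit (Wmat p Q₀ fc M G) ∧
    (∀ z ∈ spectrum ℂ ((Wmat p Q₀ fc M G).map Complex.ofReal), 0 < z.re) ∧
    ((Wmat p Q₀ fc M G).IsSymm → ∀ μ ∈ spectrum ℝ (Wmat p Q₀ fc M G), 0 < μ) :=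
  Wmat_diagonally_dominant_general p Q₀ hpos hrad hint hone M G hGsub hG fc hfc hA

end PadicES
end
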